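/- Let d ≥ 1 and let f : ℝ_{>0}^d → ℝ be componentwise subadditive and Lebesgue measurable. Let T be either ℝ_{>0} or ℤ_{>0}, and for each i ∈ {1,…,d} let x_i : T → ℝ_{>0} satisfy lim_{t→+∞} x_i(t) = +∞. Then inf_{t ∈ T} f(x_1(t),…,x_d(t))/(x_1(t)⋯x_d(t)) = inf_{x_1,…,x_d > 0} f(x_1,…,x_d)/(x_1⋯x_d). -/

import Mathlib

/-!
Fix `x > 0`. Measurability and subadditivity bound `f` above by some `B` on the box
`∏ [xᵢ, 2xᵢ]`: if `f z` were huge for some `z` in it, then for every `s ∈ ∏ (0, xᵢ)` one of the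
`2ᵈ` points with coordinates `sᵢ` or `zᵢ - sᵢ` would carry a large value, and since these
reflections preserve volume, the sets `{f > M}` could not shrink to a null set. Writing
`yᵢ = mᵢ xᵢ + rᵢ` with `r` in the box, iterated subadditivity gives
`f y ≤ (∏ mᵢ) f x + (∏ (mᵢ + 1) - ∏ mᵢ) B`, hence `limsup f y / ∏ yᵢ ≤ f x / ∏ xᵢ` as all
`yᵢ → ∞`, which any curve tending to infinity inherits.
-/

open Filter MeasureTheory Topology

def ComponentwiseSubadditive {ι : Type*} [DecidableEq ι] (f : (ι → ℝ) → ℝ) : Prop :=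
  ∀ (i : ι) (x : ι → ℝ) (y : ℝ), (∀ j, 0 < x j) → 0 < y →
    f (Function.update x i (x i + y)) ≤ f x + f (Function.update x i y)

theorem tendsto_measure_setOf_lt_atTop {α : Type*} [MeasurableSpace α] {μ : Measure α}
    [IsFiniteMeasure μ] {g : α → ℝ} (hg : AEMeasurable g μ) :
    Tendsto (fun M : ℝ => μ {y | M < g y}) atTop (𝓝 0) := by
  have hempty : ⋂ M : ℝ, {y | M < g y} = ∅ :=
    Set.iInter_eq_empty_iff.2 fun y => ⟨g y, lt_irrefl (g y)⟩
  have := tendsto_measure_iInter_atTop (s := fun M : ℝ => {y | M < g y})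
    (fun M => nullMeasurableSet_lt aemeasurable_const hg)
    (fun M M' hMM' y hy => hMM'.trans_lt hy) ⟨0, measure_ne_top μ _⟩
  rwa [hempty, measure_empty] at this

theorem floor_div_sub_one_mul_mem_Icc {c y : ℝ} (hc : 0 < c) (hcy : c ≤ y) :
    ((⌊y / c⌋₊ - 1 : ℕ) : ℝ) * c ∈ Set.Icc (y - 2 * c) (y - c) := by
  have hfloor : 1 ≤ ⌊y / c⌋₊ := Nat.le_floor (by rwa [Nat.cast_one, one_le_div hc])
  have hle : (⌊y / c⌋₊ : ℝ) * c ≤ y :=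
    (le_div_iff₀ hc).1 (Nat.floor_le (div_nonneg (hc.le.trans hcy) hc.le))
  have hlt : y < (⌊y / c⌋₊ + 1 : ℝ) * c := (div_lt_iff₀ hc).1 (Nat.lt_floor_add_one _)
  rw [Nat.cast_sub hfloor, Nat.cast_one]
  constructor <;> nlinarith

theorem tendsto_div_of_mem_Icc_sub {α : Type*} {l : Filter α} {g w : α → ℝ} {K : ℝ}
    (hw : Tendsto w l atTop) (hg : ∀ᶠ t in l, g t ∈ Set.Icc (w t - K) (w t)) :
    Tendsto (fun t => g t / w t) l (𝓝 1) := by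
  have hlower : Tendsto (fun t => 1 - K / w t) l (𝓝 1) := by
    simpa using (tendsto_const_nhds.div_atTop hw).const_sub 1
  refine tendsto_of_tendsto_of_tendsto_of_le_of_le' hlower tendsto_const_nhds ?_ ?_
  all_goals
    filter_upwards [hg, hw.eventually_gt_atTop 0] with t ⟨hlo, hhi⟩ hwt
  · rw [one_sub_div hwt.ne']
    exact div_le_div_of_nonneg_right hlo hwt.le
  · exact div_le_one_of_le₀ hhi hwt.le

namespace ComponentwiseSubadditive

variable {ι : Type*} [DecidableEq ι] {f : (ι → ℝ) → ℝ}

theorem le_apply_update_add_apply_update (hf : ComponentwiseSubadditive f) {z : ι → ℝ}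
    (hz : ∀ j, 0 < z j) (i : ι) {a b : ℝ} (ha : 0 < a) (hb : 0 < b) (hab : a + b = z i) :
    f z ≤ f (Function.update z i a) + f (Function.update z i b) := by
  have hpos : ∀ j, 0 < Function.update z i a j := fun j => by
    rcases eq_or_ne j i with rfl | hj
    · simpa using ha
    · simpa [hj] using hz j
  simpa [hab] using hf i _ b hpos hb

theorem exists_le_two_pow_card_mul (hf : ComponentwiseSubadditive f) {s : ι → ℝ}
    (hs : ∀ i, 0 < s i) (T : Finset ι) :
    ∀ z : ι → ℝ, (∀ i, 0 < z i) → (∀ i ∈ T, s i < z i) →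
      ∃ p : ι → ℝ, (∀ i ∈ T, p i = s i ∨ p i = z i - s i) ∧ (∀ i ∉ T, p i = z i) ∧
        f z ≤ 2 ^ T.card * f p := by
  induction T using Finset.induction_on with
  | empty => exact fun z _ _ => ⟨z, by simp, fun _ _ => rfl, by simp⟩
  | @insert a T ha ih =>
    intro z hz hsz
    have hsa : s a < z a := hsz a (Finset.mem_insert_self a T)
    obtain ⟨c, hc, hcpos, hfc⟩ : ∃ c, (c = s a ∨ c = z a - s a) ∧ 0 < c ∧
        f z ≤ 2 * f (Function.update z a c) := by
      have := hf.le_apply_update_add_apply_update hz a (hs a) (sub_pos.2 hsa) (add_sub_cancel _ _)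
      rcases le_total (f (Function.update z a (s a))) (f (Function.update z a (z a - s a)))
        with h | h
      · exact ⟨_, Or.inr rfl, sub_pos.2 hsa, by linarith⟩
      · exact ⟨_, Or.inl rfl, hs a, by linarith⟩
    have hz' : ∀ i, 0 < Function.update z a c i := fun i => by
      rcases eq_or_ne i a with rfl | hi
      · simpa using hcpos
      · simpa [hi] using hz i
    obtain ⟨p, hpT, hpT', hfp⟩ := ih _ hz' fun i hi => by
      simpa [ne_of_mem_of_not_mem hi ha] using hsz i (Finset.mem_insert_of_mem hi)
    refine ⟨p, fun i hi => ?_, fun i hi => ?_, ?_⟩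
    · rcases Finset.mem_insert.1 hi with rfl | hi
      · simpa [hpT' i ha] using hc
      · simpa [ne_of_mem_of_not_mem hi ha] using hpT i hi
    · have hia : i ≠ a := fun h => hi (h ▸ Finset.mem_insert_self a T)
      simpa [hia] using hpT' i fun h => hi (Finset.mem_insert_of_mem h)
    · rw [Finset.card_insert_of_notMem ha, pow_succ]
      nlinarith

theorem apply_update_nat_mul_add_le (hf : ComponentwiseSubadditive f) {w : ι → ℝ}
    (hw : ∀ j, 0 < w j) (i : ι) (m : ℕ) {r : ℝ} (hr : 0 < r) :
    f (Function.update w i (m * w i + r)) ≤ m * f w + f (Function.update w i r) := by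
  induction m with
  | zero => simp
  | succ m ih =>
    have hstep := hf i w (m * w i + r) hw (by have := hw i; positivity)
    push_cast
    calc f (Function.update w i ((m + 1) * w i + r))
        = f (Function.update w i (w i + (m * w i + r))) := by ring_nf
      _ ≤ f w + f (Function.update w i (m * w i + r)) := hstep
      _ ≤ (m + 1) * f w + f (Function.update w i r) := by linarith

theorem apply_piecewise_le (hf : ComponentwiseSubadditive f) {x : ι → ℝ} (hx : ∀ i, 0 < x i)
    {B : ℝ} (hB : ∀ z ∈ Set.univ.pi fun i => Set.Icc (x i) (2 * x i), f z ≤ B) (m : ι → ℕ)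
    {r : ι → ℝ} (hr : r ∈ Set.univ.pi fun i => Set.Icc (x i) (2 * x i)) (T : Finset ι) :
    ∀ w ∈ Set.univ.pi fun i => Set.Icc (x i) (2 * x i),
      f (T.piecewise (fun i => m i * x i + r i) w) ≤
        (∏ i ∈ T, (m i : ℝ)) * f (T.piecewise x w) +
          (∏ i ∈ T, ((m i : ℝ) + 1) - ∏ i ∈ T, (m i : ℝ)) * B := by
  -- Generalizing over `w` in the box lets `B` bound the mixed points
  -- `T.piecewise x (update w a (r a))` produced by the induction step.
  set box := Set.univ.pi fun i => Set.Icc (x i) (2 * x i)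
  have hpos : ∀ z ∈ box, ∀ i, 0 < z i := fun z hz i => (hx i).trans_le (hz i trivial).1
  have hupdate : ∀ w ∈ box, ∀ a, ∀ v ∈ Set.Icc (x a) (2 * x a), Function.update w a v ∈ box :=
    fun w hw a v hv => (Set.update_mem_pi_iff_of_mem hw).2 fun _ => hv
  induction T using Finset.induction_on with
  | empty => simp
  | @insert a T ha ih =>
    intro w hw
    set y := fun i => (m i : ℝ) * x i + r i
    have hy : ∀ i, 0 < y i := fun i => by have := hpos r hr i; have := hx i; positivity
    have hxa : x a ∈ Set.Icc (x a) (2 * x a) := ⟨le_rfl, by linarith [hx a]⟩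
    set w₀ := T.piecewise y (Function.update w a (x a))
    have hw₀ : ∀ i, 0 < w₀ i := fun i => by
      by_cases hi : i ∈ T
      · simpa [w₀, hi] using hy i
      · simpa [w₀, hi] using hpos _ (hupdate w hw a _ hxa) i
    have hw₀a : w₀ a = x a := by simp [w₀, ha]
    have hw₀update : ∀ v, Function.update w₀ a v = T.piecewise y (Function.update w a v) := by
      simp [w₀, Finset.update_piecewise_of_notMem _ _ _ ha]
    have hpiecewise : ∀ g : ι → ℝ, (insert a T).piecewise g w =
        T.piecewise g (Function.update w a (g a)) := fun g => by
      rw [Finset.piecewise_insert, Finset.update_piecewise_of_notMem _ _ _ ha]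
    have hra : r a ∈ Set.Icc (x a) (2 * x a) := hr a trivial
    have hP : 0 ≤ ∏ i ∈ T, (m i : ℝ) := Finset.prod_nonneg fun i _ => Nat.cast_nonneg _
    have hB' : f (T.piecewise x (Function.update w a (r a))) ≤ B :=
      hB _ (Finset.piecewise_mem_set_pi _ (fun i _ => ⟨le_rfl, by linarith [hx i]⟩)
        (hupdate w hw a _ hra))
    calc f ((insert a T).piecewise y w)
        = f (Function.update w₀ a (m a * w₀ a + r a)) := by rw [hpiecewise, hw₀update, hw₀a]
      _ ≤ m a * f w₀ + f (Function.update w₀ a (r a)) :=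
        hf.apply_update_nat_mul_add_le hw₀ a (m a) (hpos r hr a)
      _ ≤ m a * ((∏ i ∈ T, (m i : ℝ)) * f (T.piecewise x (Function.update w a (x a))) +
            (∏ i ∈ T, ((m i : ℝ) + 1) - ∏ i ∈ T, (m i : ℝ)) * B) +
          ((∏ i ∈ T, (m i : ℝ)) * B + (∏ i ∈ T, ((m i : ℝ) + 1) - ∏ i ∈ T, (m i : ℝ)) * B) := by
        rw [hw₀update]
        gcongr
        · exact ih _ (hupdate w hw a _ hxa)
        · exact (ih _ (hupdate w hw a _ hra)).trans (by gcongr)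
      _ = _ := by
        rw [Finset.prod_insert ha, Finset.prod_insert ha, hpiecewise]
        ring

variable [Fintype ι]

theorem exists_le_two_pow_mul_piecewise (hf : ComponentwiseSubadditive f) {s z : ι → ℝ}
    (hs : ∀ i, 0 < s i) (hsz : ∀ i, s i < z i) :
    ∃ S : Finset ι, f z ≤ 2 ^ Fintype.card ι * f (S.piecewise s (z - s)) := by
  obtain ⟨p, hp, -, hfp⟩ := hf.exists_le_two_pow_card_mul hs Finset.univ z
    (fun i => (hs i).trans (hsz i)) fun i _ => hsz i
  refine ⟨Finset.univ.filter fun i => p i = s i, ?_⟩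
  have hpS : (Finset.univ.filter fun i => p i = s i).piecewise s (z - s) = p := by
    funext i
    by_cases h : p i = s i
    · simp [h]
    · simpa [h] using ((hp i (Finset.mem_univ i)).resolve_left h).symm
  rwa [hpS]

theorem volume_pi_Ioo_le (hf : ComponentwiseSubadditive f) {x z : ι → ℝ}
    (hz : z ∈ Set.univ.pi fun i => Set.Icc (x i) (2 * x i)) {M : ℝ}
    (hM : 2 ^ Fintype.card ι * M < f z) :
    volume (Set.univ.pi fun i => Set.Ioo 0 (x i)) ≤
      2 ^ Fintype.card ι * volume.restrict (Set.univ.pi fun i => Set.Ioc 0 (2 * x i))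
        {y | M < f y} := by
  set O := Set.univ.pi fun i => Set.Ioc 0 (2 * x i)
  have hz' : ∀ i, x i ≤ z i ∧ z i ≤ 2 * x i := fun i => hz i (Set.mem_univ i)
  have hreflect : ∀ S : Finset ι,
      MeasurePreserving (fun s => S.piecewise s (z - s)) volume volume := fun S =>
    volume_preserving_pi (f := fun i t => if i ∈ S then t else z i - t) fun i => by
      split_ifs
      · exact MeasurePreserving.id _
      · exact Measure.measurePreserving_sub_left volume (z i)
  have hcover : (Set.univ.pi fun i => Set.Ioo 0 (x i)) ⊆
      ⋃ S : Finset ι, (fun s => S.piecewise s (z - s)) ⁻¹' ({y | M < f y} ∩ O) := by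
    intro s hs
    have hs' : ∀ i, 0 < s i ∧ s i < x i := fun i => hs i (Set.mem_univ i)
    obtain ⟨S, hS⟩ := hf.exists_le_two_pow_mul_piecewise (fun i => (hs' i).1)
      fun i => (hs' i).2.trans_le (hz' i).1
    refine Set.mem_iUnion.2 ⟨S, ?_, fun i _ => ?_⟩
    · show M < f _
      have : (0 : ℝ) < 2 ^ Fintype.card ι := by positivity
      nlinarith
    · have := hs' i
      have := hz' i
      by_cases hi : i ∈ S
      · simp only [Finset.piecewise_eq_of_mem _ _ _ hi]
        constructor <;> linarith
      · simp only [Finset.piecewise_eq_of_notMem _ _ _ hi, Pi.sub_apply]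
        constructor <;> linarith
  have hO : MeasurableSet O := MeasurableSet.univ_pi fun i => measurableSet_Ioc
  calc volume (Set.univ.pi fun i => Set.Ioo 0 (x i))
      ≤ ∑ S : Finset ι, volume ((fun s => S.piecewise s (z - s)) ⁻¹' ({y | M < f y} ∩ O)) :=
        (measure_mono hcover).trans (measure_iUnion_fintype_le _ _)
    _ ≤ ∑ _S : Finset ι, volume ({y | M < f y} ∩ O) :=
        Finset.sum_le_sum fun S _ => (hreflect S).measure_preimage_le _
    _ = 2 ^ Fintype.card ι * volume.restrict O {y | M < f y} := by
        rw [Finset.sum_const, Finset.card_univ, Fintype.card_finset, nsmul_eq_mul,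
          Measure.restrict_apply' hO]
        push_cast
        rfl

theorem bddAbove_image_pi_Icc (hf : ComponentwiseSubadditive f)
    (hmeas : AEMeasurable f (volume.restrict {x : ι → ℝ | ∀ i, 0 < x i}))
    {x : ι → ℝ} (hx : ∀ i, 0 < x i) :
    BddAbove (f '' Set.univ.pi fun i => Set.Icc (x i) (2 * x i)) := by
  set O := Set.univ.pi fun i => Set.Ioc 0 (2 * x i)
  have : IsFiniteMeasure (volume.restrict O) := by
    refine isFiniteMeasure_restrict.2 (ne_top_of_le_ne_top ?_ (measure_mono
      (Set.pi_mono fun i _ => Set.Ioc_subset_Icc_self)))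
    rw [Set.pi_univ_Icc, Real.volume_Icc_pi]
    exact ENNReal.prod_ne_top fun i _ => ENNReal.ofReal_ne_top
  have hmeasO : AEMeasurable f (volume.restrict O) :=
    hmeas.mono_set fun y hy i => (hy i (Set.mem_univ i)).1
  have hQ : 0 < volume (Set.univ.pi fun i => Set.Ioo 0 (x i)) := by
    rw [Real.volume_pi_Ioo]
    exact CanonicallyOrderedAdd.prod_pos.2 fun i _ => ENNReal.ofReal_pos.2 (by simpa using hx i)
  have htail : Tendsto (fun M : ℝ => 2 ^ Fintype.card ι * volume.restrict O {y | M < f y})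
      atTop (𝓝 0) := by
    simpa using ENNReal.Tendsto.const_mul (tendsto_measure_setOf_lt_atTop hmeasO)
      (Or.inr (by simp))
  obtain ⟨M, hM⟩ := (htail.eventually (gt_mem_nhds hQ)).exists
  by_contra hunbdd
  obtain ⟨_, ⟨z, hz, rfl⟩, hfz⟩ := not_bddAbove_iff.1 hunbdd (2 ^ Fintype.card ι * M)
  exact (hf.volume_pi_Ioo_le hz hfz).not_gt hM

theorem div_prod_le (hf : ComponentwiseSubadditive f) {x : ι → ℝ} (hx : ∀ i, 0 < x i)
    {B : ℝ} (hB : ∀ z ∈ Set.univ.pi fun i => Set.Icc (x i) (2 * x i), f z ≤ B)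
    {m : ι → ℕ} {y : ι → ℝ}
    (hmy : ∀ i, (m i : ℝ) * x i ∈ Set.Icc (y i - 2 * x i) (y i - x i)) :
    f y / ∏ i, y i ≤
      (f x * ∏ i, (m i * x i / y i) +
        B * (∏ i, ((m i + 1) * x i / y i) - ∏ i, (m i * x i / y i))) / ∏ i, x i := by
  have hr : (fun i => y i - m i * x i) ∈ Set.univ.pi fun i => Set.Icc (x i) (2 * x i) :=
    fun i _ => ⟨by linarith [(hmy i).2], by linarith [(hmy i).1]⟩
  have hy : ∀ i, 0 < y i := fun i => by
    have := (hmy i).2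
    have := hx i
    have : 0 ≤ (m i : ℝ) * x i := by positivity
    linarith
  have hdecomp := hf.apply_piecewise_le hx hB m hr Finset.univ x
    fun i _ => ⟨le_rfl, by linarith [hx i]⟩
  simp only [Finset.piecewise_univ, add_sub_cancel] at hdecomp
  have hY : 0 < ∏ i, y i := Finset.prod_pos fun i _ => hy i
  have hX : 0 < ∏ i, x i := Finset.prod_pos fun i _ => hx i
  have hrhs : (f x * ∏ i, (m i * x i / y i) +
        B * (∏ i, ((m i + 1) * x i / y i) - ∏ i, (m i * x i / y i))) / ∏ i, x i =
      ((∏ i, (m i : ℝ)) * f x + (∏ i, ((m i : ℝ) + 1) - ∏ i, (m i : ℝ)) * B) / ∏ i, y i := by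
    simp only [Finset.prod_div_distrib, Finset.prod_mul_distrib]
    field_simp
  rw [hrhs]
  exact div_le_div_of_nonneg_right hdecomp hY.le

theorem eventually_div_prod_lt (hf : ComponentwiseSubadditive f)
    (hmeas : AEMeasurable f (volume.restrict {x : ι → ℝ | ∀ i, 0 < x i}))
    {x : ι → ℝ} (hx : ∀ i, 0 < x i) {q : ℝ} (hq : f x / ∏ i, x i < q) :
    ∀ᶠ y in Filter.pi fun _ : ι => atTop, f y / ∏ i, y i < q := by
  obtain ⟨B, hB⟩ := hf.bddAbove_image_pi_Icc hmeas hx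
  set m : (ι → ℝ) → ι → ℕ := fun y i => ⌊y i / x i⌋₊ - 1
  have hcoord : ∀ i, Tendsto (fun y : ι → ℝ => y i) (Filter.pi fun _ => atTop) atTop :=
    tendsto_eval_pi _
  have hm : ∀ᶠ y in Filter.pi fun _ => atTop,
      ∀ i, (m y i : ℝ) * x i ∈ Set.Icc (y i - 2 * x i) (y i - x i) :=
    eventually_all.2 fun i => ((hcoord i).eventually_ge_atTop (x i)).mono fun y hy =>
      floor_div_sub_one_mul_mem_Icc (hx i) hy
  have hρ : Tendsto (fun y => ∏ i, (m y i * x i / y i)) (Filter.pi fun _ => atTop) (𝓝 1) := by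
    simpa using tendsto_finsetProd Finset.univ fun i _ =>
      tendsto_div_of_mem_Icc_sub (K := 2 * x i) (hcoord i) (hm.mono fun y hy =>
        ⟨(hy i).1, by linarith [(hy i).2, hx i]⟩)
  have hσ : Tendsto (fun y => ∏ i, ((m y i + 1) * x i / y i)) (Filter.pi fun _ => atTop)
      (𝓝 1) := by
    simpa using tendsto_finsetProd Finset.univ fun i _ =>
      tendsto_div_of_mem_Icc_sub (K := 2 * x i) (hcoord i) (hm.mono fun y hy =>
        ⟨by linarith [(hy i).1, hx i], by linarith [(hy i).2]⟩)
  have hlim : Tendsto (fun y => (f x * ∏ i, (m y i * x i / y i) + B *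
      (∏ i, ((m y i + 1) * x i / y i) - ∏ i, (m y i * x i / y i))) / ∏ i, x i)
      (Filter.pi fun _ => atTop) (𝓝 (f x / ∏ i, x i)) := by
    simpa using ((hρ.const_mul (f x)).add ((hσ.sub hρ).const_mul B)).div_const (∏ i, x i)
  filter_upwards [hm, hlim.eventually (gt_mem_nhds hq)] with y hy hlt
  exact (hf.div_prod_le hx (fun z hz => hB (Set.mem_image_of_mem f hz)) hy).trans_lt hlt

theorem iInf_div_prod_eq_of_tendsto (hf : ComponentwiseSubadditive f)
    (hmeas : AEMeasurable f (volume.restrict {x : ι → ℝ | ∀ i, 0 < x i}))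
    {α : Type*} {l : Filter α} [l.NeBot] {s : Set α} (hs : ∀ᶠ t in l, t ∈ s)
    {w : ι → α → ℝ} (hwpos : ∀ i, ∀ t ∈ s, 0 < w i t) (hw : ∀ i, Tendsto (w i) l atTop) :
    (⨅ t ∈ s, ((f (fun i => w i t) / ∏ i, w i t : ℝ) : EReal)) =
      ⨅ x ∈ {x : ι → ℝ | ∀ i, 0 < x i}, ((f x / ∏ i, x i : ℝ) : EReal) := by
  refine le_antisymm (le_iInf₂ fun x hx => EReal.le_of_forall_lt_iff_le.1 fun q hq => ?_)
    (le_iInf₂ fun t ht => iInf₂_le _ fun i => hwpos i t ht)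
  have hcurve : Tendsto (fun t i => w i t) l (Filter.pi fun _ => atTop) := tendsto_pi.2 hw
  obtain ⟨t, hlt, hts⟩ := ((hcurve.eventually
    (hf.eventually_div_prod_lt hmeas hx (EReal.coe_lt_coe_iff.1 hq))).and hs).exists
  exact (iInf₂_le t hts).trans (EReal.coe_le_coe_iff.2 hlt.le)

end ComponentwiseSubadditive

theorem fekete_lemma_inf_along_curves_general
    (d : ℕ) (f : (Fin d → ℝ) → ℝ)
    (hf : ∀ (i : Fin d) (x : Fin d → ℝ) (y : ℝ), (∀ j, 0 < x j) → 0 < y →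
      f (Function.update x i (x i + y)) ≤ f x + f (Function.update x i y))
    (hmeas : AEMeasurable f (volume.restrict {x : Fin d → ℝ | ∀ i, 0 < x i}))
    (u : Fin d → ℝ → ℝ) (hupos : ∀ i t, 0 < t → 0 < u i t)
    (hu : ∀ i, Tendsto (u i) atTop atTop)
    (v : Fin d → ℕ → ℝ) (hvpos : ∀ i n, 0 < n → 0 < v i n)
    (hv : ∀ i, Tendsto (v i) atTop atTop) :
    (⨅ t ∈ Set.Ioi (0 : ℝ),
        ((f (fun i => u i t) / ∏ i, u i t : ℝ) : EReal)) =
      (⨅ x ∈ {x : Fin d → ℝ | ∀ i, 0 < x i}, ((f x / ∏ i, x i : ℝ) : EReal)) ∧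
    (⨅ n ∈ {n : ℕ | 0 < n},
        ((f (fun i => v i n) / ∏ i, v i n : ℝ) : EReal)) =
      (⨅ x ∈ {x : Fin d → ℝ | ∀ i, 0 < x i}, ((f x / ∏ i, x i : ℝ) : EReal)) :=
  ⟨ComponentwiseSubadditive.iInf_div_prod_eq_of_tendsto hf hmeas (eventually_gt_atTop 0) hupos hu,
    ComponentwiseSubadditive.iInf_div_prod_eq_of_tendsto hf hmeas (eventually_gt_atTop 0) hvpos hv⟩

/-- Let `f` be componentwise subadditive and Lebesgue measurable on the positive
orthant of `ℝ^d`, and for each coordinate `i` let `t ↦ uᵢ t` (with `t` ranging over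
the positive reals) and `n ↦ vᵢ n` (with `n` ranging over the positive integers) be
positive-valued functions tending to `+∞`.  Then the infimum over the parameter of
`f(u₁(t),…,u_d(t))/(u₁(t)⋯u_d(t))` equals
`inf_{x₁,…,x_d > 0} f(x₁,…,x_d)/(x₁⋯x_d)` (in `ℝ ∪ {±∞}`), and likewise along the
positive integers. -/
theorem fekete_lemma_inf_along_curves
    (d : ℕ) (hd : 1 ≤ d) (f : (Fin d → ℝ) → ℝ)
    (hf : ∀ (i : Fin d) (x : Fin d → ℝ) (y : ℝ), (∀ j, 0 < x j) → 0 < y →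
      f (Function.update x i (x i + y)) ≤ f x + f (Function.update x i y))
    (hmeas : AEMeasurable f (volume.restrict {x : Fin d → ℝ | ∀ i, 0 < x i}))
    (u : Fin d → ℝ → ℝ) (hupos : ∀ i t, 0 < t → 0 < u i t)
    (hu : ∀ i, Tendsto (u i) atTop atTop)
    (v : Fin d → ℕ → ℝ) (hvpos : ∀ i n, 0 < n → 0 < v i n)
    (hv : ∀ i, Tendsto (v i) atTop atTop) :
    (⨅ t ∈ Set.Ioi (0 : ℝ),
        ((f (fun i => u i t) / ∏ i, u i t : ℝ) : EReal)) =
      (⨅ x ∈ {x : Fin d → ℝ | ∀ i, 0 < x i}, ((f x / ∏ i, x i : ℝ) : EReal)) ∧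
    (⨅ n ∈ {n : ℕ | 0 < n},
        ((f (fun i => v i n) / ∏ i, v i n : ℝ) : EReal)) =
      (⨅ x ∈ {x : Fin d → ℝ | ∀ i, 0 < x i}, ((f x / ∏ i, x i : ℝ) : EReal)) :=
  fekete_lemma_inf_along_curves_general d f hf hmeas u hupos hu v hvpos hv
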